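/- For every natural number a ≥ 1, T_a = U^a ∘ P, where U(x,y,z) = (2xz − y, x, z), P(x,y,z) = (x, z, y), and T_a(x,y,z) = (x·U_a(y) − z·U_{a-1}(y), x·U_{a-1}(y) − z·U_{a-2}(y), y). -/
import Mathlib


/-- Evaluation of the Chebyshev polynomial of the second kind. -/
noncomputable def chebU (n : ℤ) (x : ℝ) : ℝ := (Polynomial.Chebyshev.U ℝ n).eval x

/-- The trace map `T_a`. -/
noncomputable def traceMap (a : ℕ) (v : ℝ × ℝ × ℝ) : ℝ × ℝ × ℝ :=
  (v.1 * chebU a v.2.1 - v.2.2 * chebU ((a : ℤ) - 1) v.2.1,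
   v.1 * chebU ((a : ℤ) - 1) v.2.1 - v.2.2 * chebU ((a : ℤ) - 2) v.2.1,
   v.2.1)

/-- The map `U`. -/
def mapU (v : ℝ × ℝ × ℝ) : ℝ × ℝ × ℝ := (2 * v.1 * v.2.2 - v.2.1, v.1, v.2.2)

/-- The swap map `P`. -/
def mapP (v : ℝ × ℝ × ℝ) : ℝ × ℝ × ℝ := (v.1, v.2.2, v.2.1)

lemma chebU_rec (n : ℤ) (x : ℝ) : chebU n x = 2 * x * chebU (n - 1) x - chebU (n - 2) x := by
  simp [chebU, Polynomial.Chebyshev.U_eq ℝ n]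

lemma chebU_rec' (n : ℤ) (x : ℝ) : chebU (n + 1) x = 2 * x * chebU n x - chebU (n - 1) x := by
  rw [chebU_rec (n + 1) x, show n + 1 - 1 = n from by ring, show n + 1 - 2 = n - 1 from by ring]

lemma chebU_zero (x : ℝ) : chebU 0 x = 1 := by simp [chebU]

lemma chebU_one (x : ℝ) : chebU 1 x = 2 * x := by simp [chebU, Polynomial.Chebyshev.U_one]

lemma chebU_neg_one (x : ℝ) : chebU (-1) x = 0 := by simp [chebU]

theorem traceMap_eq_iterate (a : ℕ) (ha : 1 ≤ a) :
    traceMap a = mapU^[a] ∘ mapP := by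
  induction a with
  | zero => omega
  | succ n ih =>
    rcases Nat.eq_zero_or_pos n with hn | hn
    · subst hn
      funext v
      simp [traceMap, mapU, mapP, chebU_zero, chebU_one, chebU_neg_one]
      ring_nf
    · rw [Function.iterate_succ', Function.comp_assoc, ← ih hn]
      funext v
      obtain ⟨x, y, z⟩ := v
      simp only [traceMap, mapU, Function.comp_apply]
      push_cast
      rw [show (n : ℤ) + 1 - 1 = n from by ring, show (n : ℤ) + 1 - 2 = (n : ℤ) - 1 from by ring]
      refine Prod.ext ?_ (Prod.ext rfl rfl) <;> simp only
      linear_combination x * chebU_rec' (n : ℤ) y - z * chebU_rec (n : ℤ) y
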